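/- arXiv:math/9610204 — 3 statements merged into one kernel-verified Lean document; each statement's English description precedes it below -/
import Mathlib

section
/- Let D ⊆ ℂ² be open, F(z₁,z₂) = (c z₁ z₂^{d}, z₂) with c ∈ ℂ*, d ∈ ℤ, defined on points with z₂ ≠ 0, and suppose F maps D ∩ (ℂ × ℂ*) bijectively onto itself. If for some w ∈ ℂ* with |c|·|w|^{d} > 1 the disc {(z₁, w) : |z₁| < ε} is contained in D, then the whole line {(z₁, w) : z₁ ∈ ℂ} is contained in D. -/
/-!
On the line `z₂ = w` the map `F` is multiplication of `z₁` by `u = c w^d`, and `|u| > 1`.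
Any point `(z₁, w)` is therefore `F^k` of the point `(z₁ / u^k, w)`, which lies in the
given disc once `k` is large; since `F` maps `D ∩ {z₂ ≠ 0}` into itself, so do its iterates.
-/

section FiberScaling

variable {𝕜 α : Type*} [NormedField 𝕜]

lemma iterate_apply_of_fiber_scaling {f : 𝕜 × α → 𝕜 × α} {u : 𝕜} {w : α}
    (hf : ∀ z, f (z, w) = (u * z, w)) (k : ℕ) (z : 𝕜) :
    f^[k] (z, w) = (u ^ k * z, w) := by
  induction k generalizing z with
  | zero => simp
  | succ k ih => rw [Function.iterate_succ_apply, hf, ih, pow_succ, mul_assoc]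

lemma exists_norm_div_pow_lt {u : 𝕜} (hu : 1 < ‖u‖) (z : 𝕜) {ε : ℝ} (hε : 0 < ε) :
    ∃ k : ℕ, ‖z / u ^ k‖ < ε := by
  obtain ⟨k, hk⟩ := pow_unbounded_of_one_lt (‖z‖ / ε) hu
  refine ⟨k, ?_⟩
  rw [norm_div, norm_pow, div_lt_iff₀ (by positivity)]
  rwa [div_lt_iff₀ hε, mul_comm] at hk

lemma mk_mem_of_mapsTo_of_fiber_scaling {S : Set (𝕜 × α)} {f : 𝕜 × α → 𝕜 × α} {u : 𝕜}
    {w : α} (hu : 1 < ‖u‖) (hf : ∀ z, f (z, w) = (u * z, w)) (hS : Set.MapsTo f S S)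
    {ε : ℝ} (hε : 0 < ε) (hdisc : ∀ z, ‖z‖ < ε → (z, w) ∈ S) (z : 𝕜) : (z, w) ∈ S := by
  obtain ⟨k, hk⟩ := exists_norm_div_pow_lt hu z hε
  have hu0 : u ≠ 0 := norm_pos_iff.mp (one_pos.trans hu)
  have hmem := hS.iterate k (hdisc _ hk)
  rwa [iterate_apply_of_fiber_scaling hf, mul_div_cancel₀ _ (pow_ne_zero k hu0)] at hmem

end FiberScaling

theorem stmt_8_general (D : Set (ℂ × ℂ)) (c : ℂ) (d : ℤ)
    (F : ℂ × ℂ → ℂ × ℂ) (hF : F = fun z => (c * z.1 * z.2 ^ d, z.2))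
    (hbij : Set.BijOn F (D ∩ {p : ℂ × ℂ | p.2 ≠ 0}) (D ∩ {p : ℂ × ℂ | p.2 ≠ 0}))
    (w : ℂ) (hw : w ≠ 0) (hgt : 1 < ‖c‖ * ‖w‖ ^ d)
    (ε : ℝ) (hε : 0 < ε)
    (hdisc : {p : ℂ × ℂ | ‖p.1‖ < ε ∧ p.2 = w} ⊆ D) :
    {p : ℂ × ℂ | p.2 = w} ⊆ D := by
  rintro ⟨z, w'⟩ (hw' : w' = w)
  subst w'
  have hu : 1 < ‖c * w ^ d‖ := by rwa [norm_mul, norm_zpow]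
  have hf : ∀ z, F (z, w) = (c * w ^ d * z, w) := fun z => by
    subst hF
    simp only [Prod.mk.injEq, and_true]
    ring
  exact (mk_mem_of_mapsTo_of_fiber_scaling hu hf hbij.mapsTo hε
    (fun z hz => ⟨hdisc ⟨hz, rfl⟩, hw⟩) z).1

theorem stmt_8 (D : Set (ℂ × ℂ)) (hD : IsOpen D) (c : ℂ) (hc : c ≠ 0) (d : ℤ)
    (F : ℂ × ℂ → ℂ × ℂ) (hF : F = fun z => (c * z.1 * z.2 ^ d, z.2))
    (hbij : Set.BijOn F (D ∩ {p : ℂ × ℂ | p.2 ≠ 0}) (D ∩ {p : ℂ × ℂ | p.2 ≠ 0}))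
    (w : ℂ) (hw : w ≠ 0) (hgt : 1 < ‖c‖ * ‖w‖ ^ d)
    (ε : ℝ) (hε : 0 < ε)
    (hdisc : {p : ℂ × ℂ | ‖p.1‖ < ε ∧ p.2 = w} ⊆ D) :
    {p : ℂ × ℂ | p.2 = w} ⊆ D :=
  stmt_8_general D c d F hF hbij w hw hgt ε hε hdisc
end

section
/- Let ρ : ℝ² → ℝ be C^∞ with ρ > c > 0 everywhere and with nonnegative partial derivatives on {x₁ ≥ 0, x₂ ≥ 0}. Define φ(z) = |z₁|² + (1-|z₁|²)²|z₂|² ρ(|z₂|²(1-|z₁|²), |z₃|²(1-|z₁|²)) + (1-|z₁|²)²|z₃|² − 1 on ℂ³. Then for each a with |a| < 1, the map (z₁,z₂,z₃) ↦ ((z₁-a)/(1-āz₁), (1-āz₁)z₂/√(1-|a|²), (1-āz₁)z₃/√(1-|a|²)) maps the domain D = {φ < 0} ∩ {|z₁| < 1} into itself. -/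
open Complex Real

lemma mobius_key (a z : ℂ) :
    ‖1 - (starRingEnd ℂ) a * z‖ ^ 2 - ‖z - a‖ ^ 2
      = (1 - ‖a‖ ^ 2) * (1 - ‖z‖ ^ 2) := by
  simp only [Complex.sq_norm, Complex.normSq_apply, Complex.sub_re, Complex.sub_im,
    Complex.mul_re, Complex.mul_im, Complex.one_re, Complex.one_im,
    Complex.conj_re, Complex.conj_im]
  ring

theorem stmt_11 (ρ : ℝ × ℝ → ℝ) (hρ : ContDiff ℝ (⊤ : ℕ∞) ρ)
    (c : ℝ) (hc : 0 < c) (hρc : ∀ x, c < ρ x)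
    (hderiv : ∀ x : ℝ × ℝ, 0 ≤ x.1 → 0 ≤ x.2 →
      0 ≤ fderiv ℝ ρ x (1, 0) ∧ 0 ≤ fderiv ℝ ρ x (0, 1))
    (φ : ℂ × ℂ × ℂ → ℝ)
    (hφ : φ = fun z =>
      ‖z.1‖ ^ 2 +
        (1 - ‖z.1‖ ^ 2) ^ 2 * ‖z.2.1‖ ^ 2 *
          ρ (‖z.2.1‖ ^ 2 * (1 - ‖z.1‖ ^ 2),
             ‖z.2.2‖ ^ 2 * (1 - ‖z.1‖ ^ 2)) +
        (1 - ‖z.1‖ ^ 2) ^ 2 * ‖z.2.2‖ ^ 2 - 1)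
    (D : Set (ℂ × ℂ × ℂ))
    (hD : D = {z | ‖z.1‖ < 1 ∧ φ z < 0})
    (a : ℂ) (ha : ‖a‖ < 1) :
    ∀ z ∈ D,
      ((z.1 - a) / (1 - (starRingEnd ℂ) a * z.1),
       (1 - (starRingEnd ℂ) a * z.1) * z.2.1 / (Real.sqrt (1 - ‖a‖ ^ 2) : ℂ),
       (1 - (starRingEnd ℂ) a * z.1) * z.2.2 / (Real.sqrt (1 - ‖a‖ ^ 2) : ℂ)) ∈ D := by
  intro z hz
  rw [hD, Set.mem_setOf_eq, hφ] at hz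
  obtain ⟨hz1, hφz⟩ := hz
  beta_reduce at hφz
  rw [hD, Set.mem_setOf_eq, hφ]
  have ht : 0 < 1 - ‖z.1‖ ^ 2 := by
    nlinarith [norm_nonneg z.1]
  have hs : 0 < 1 - ‖a‖ ^ 2 := by
    nlinarith [norm_nonneg a]
  have hne : (1 : ℂ) - (starRingEnd ℂ) a * z.1 ≠ 0 := by
    intro h
    have h1 : ((starRingEnd ℂ) a * z.1) = 1 := by
      have := sub_eq_zero.mp h
      exact this.symm
    have h2 : ‖(starRingEnd ℂ) a * z.1‖ = 1 := by rw [h1]; simp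
    rw [norm_mul, Complex.norm_conj] at h2
    nlinarith [norm_nonneg a, norm_nonneg z.1]
  have hk : 0 < ‖1 - (starRingEnd ℂ) a * z.1‖ :=
    norm_pos_iff.mpr hne
  set k := ‖1 - (starRingEnd ℂ) a * z.1‖ with hkdef
  set s := 1 - ‖a‖ ^ 2 with hsdef
  set t := 1 - ‖z.1‖ ^ 2 with htdef
  have hkey : k ^ 2 - ‖z.1 - a‖ ^ 2 = s * t := mobius_key a z.1
  -- first component
  have e1 : ‖(z.1 - a) / (1 - (starRingEnd ℂ) a * z.1)‖ ^ 2
      = 1 - s * t / k ^ 2 := by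
    rw [norm_div, div_pow, ← hkdef]
    field_simp
    linarith [hkey]
  have hq : 0 < s * t / k ^ 2 := by positivity
  constructor
  · nlinarith [norm_nonneg ((z.1 - a) / (1 - (starRingEnd ℂ) a * z.1)), e1, hq]
  · -- second and third components
    have e2 : ‖(1 - (starRingEnd ℂ) a * z.1) * z.2.1 /
        (Real.sqrt s : ℂ)‖ ^ 2 = k ^ 2 * ‖z.2.1‖ ^ 2 / s := by
      rw [norm_div, norm_mul, Complex.norm_real, Real.norm_eq_abs, _root_.abs_of_nonneg (Real.sqrt_nonneg _),
        div_pow, mul_pow, Real.sq_sqrt hs.le, ← hkdef]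
    have e3 : ‖(1 - (starRingEnd ℂ) a * z.1) * z.2.2 /
        (Real.sqrt s : ℂ)‖ ^ 2 = k ^ 2 * ‖z.2.2‖ ^ 2 / s := by
      rw [norm_div, norm_mul, Complex.norm_real, Real.norm_eq_abs, _root_.abs_of_nonneg (Real.sqrt_nonneg _),
        div_pow, mul_pow, Real.sq_sqrt hs.le, ← hkdef]
    simp only [e1, e2, e3]
    have harg2 : k ^ 2 * ‖z.2.1‖ ^ 2 / s * (1 - (1 - s * t / k ^ 2))
        = ‖z.2.1‖ ^ 2 * t := by
      field_simp
      ring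
    have harg3 : k ^ 2 * ‖z.2.2‖ ^ 2 / s * (1 - (1 - s * t / k ^ 2))
        = ‖z.2.2‖ ^ 2 * t := by
      field_simp
      ring
    rw [harg2, harg3]
    set x := ‖z.2.1‖ ^ 2 with hx
    set y := ‖z.2.2‖ ^ 2 with hy
    set u := ‖z.1‖ ^ 2 with hu
    set R := ρ (x * t, y * t) with hR
    clear_value R x y u
    clear_value k s t
    clear hφ hD hρ hρc hderiv hkdef hsdef hkey e1 e2 e3 harg2 harg3 hne ha hc hz1 hx hy hR
    -- from hφz get the crucial bound
    have h2 : t * (x * t * R + y * t - 1) < 0 := by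
      nlinarith [hφz, htdef]
    have hlt : x * t * R + y * t - 1 < 0 := by
      by_contra h
      push_neg at h
      nlinarith [mul_nonneg ht.le h, h2]
    have hqk : s * t / k ^ 2 * (k ^ 2 / s) = t := by
      field_simp
    have hfin : 1 - s * t / k ^ 2 +
        (1 - (1 - s * t / k ^ 2)) ^ 2 * (k ^ 2 * x / s) * R +
        (1 - (1 - s * t / k ^ 2)) ^ 2 * (k ^ 2 * y / s) - 1
        = (s * t / k ^ 2) * (x * t * R + y * t - 1) := by
      calc 1 - s * t / k ^ 2 +
          (1 - (1 - s * t / k ^ 2)) ^ 2 * (k ^ 2 * x / s) * R +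
          (1 - (1 - s * t / k ^ 2)) ^ 2 * (k ^ 2 * y / s) - 1
          = (s * t / k ^ 2) * ((s * t / k ^ 2 * (k ^ 2 / s)) * x * R
            + (s * t / k ^ 2 * (k ^ 2 / s)) * y - 1) := by ring
        _ = (s * t / k ^ 2) * (x * t * R + y * t - 1) := by rw [hqk]; ring
    rw [hfin]
    exact mul_neg_of_pos_of_neg hq hlt
end

section
/- For any R > 1 and β ≠ 0, and any t ∈ ℝ, the map (z₁,z₂) ↦ (z₁ + t, e^{β(2tz₁ + t²)} z₂) maps the domain G = {(z₁,z₂) : e^{β|z₁|²} < |z₂| < R e^{β|z₁|²}} bijectively onto itself; in particular Aut(G) is noncompact (contains a one-parameter noncompact family). -/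
open Complex Real

/-!
The maps `shear β t` form a one-parameter group, so `shear β (-t)` inverts `shear β t`. Each of them
preserves the domain because `|z₁ + t|² = |z₁|² + 2t Re z₁ + t²` gives
`e^{β|z₁ + t|²} = |e^{β(2tz₁ + t²)}| e^{β|z₁|²}`: both bounds on `|z₂|` are rescaled by the same
positive factor as `|z₂|` itself.
-/

noncomputable def shear (β t : ℝ) (p : ℂ × ℂ) : ℂ × ℂ :=
  (p.1 + t, Complex.exp (β * (2 * t * p.1 + t ^ 2)) * p.2)

def expShell (R β : ℝ) : Set (ℂ × ℂ) :=
  {p | Real.exp (β * ‖p.1‖ ^ 2) < ‖p.2‖ ∧ ‖p.2‖ < R * Real.exp (β * ‖p.1‖ ^ 2)}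

theorem shear_zero (β : ℝ) (p : ℂ × ℂ) : shear β 0 p = p := by
  simp [shear]

theorem shear_add (β s t : ℝ) (p : ℂ × ℂ) : shear β (s + t) p = shear β s (shear β t p) := by
  simp only [shear, Complex.ofReal_add, Prod.mk.injEq]
  constructor
  · ring
  · rw [← mul_assoc, ← Complex.exp_add]
    ring_nf

theorem shear_neg_shear (β t : ℝ) (p : ℂ × ℂ) : shear β (-t) (shear β t p) = p := by
  rw [← shear_add, neg_add_cancel, shear_zero]

theorem real_exp_mul_sq_norm_add (β t : ℝ) (z : ℂ) :
    Real.exp (β * ‖z + t‖ ^ 2) =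
      ‖Complex.exp (β * (2 * t * z + t ^ 2))‖ * Real.exp (β * ‖z‖ ^ 2) := by
  rw [Complex.norm_exp, ← Real.exp_add, Complex.sq_norm, Complex.sq_norm]
  congr 1
  simp [Complex.normSq_apply, ← Complex.ofReal_pow]
  ring

theorem shear_mapsTo_expShell (R β t : ℝ) : Set.MapsTo (shear β t) (expShell R β) (expShell R β) := by
  rintro ⟨z₁, z₂⟩ ⟨hlower, hupper⟩
  have hc : 0 < ‖Complex.exp (β * (2 * t * z₁ + t ^ 2))‖ := norm_pos_iff.mpr (Complex.exp_ne_zero _)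
  simp only [expShell, shear, Set.mem_ofPred_eq, norm_mul, real_exp_mul_sq_norm_add, mul_left_comm R]
  exact ⟨mul_lt_mul_of_pos_left hlower hc, mul_lt_mul_of_pos_left hupper hc⟩

theorem stmt_16_general (R β : ℝ) (t : ℝ) :
    Set.BijOn
      (fun p : ℂ × ℂ =>
        (p.1 + (t : ℂ), Complex.exp ((β : ℂ) * (2 * (t : ℂ) * p.1 + (t : ℂ) ^ 2)) * p.2))
      {p : ℂ × ℂ | Real.exp (β * ‖p.1‖ ^ 2) < ‖p.2‖ ∧
        ‖p.2‖ < R * Real.exp (β * ‖p.1‖ ^ 2)}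
      {p : ℂ × ℂ | Real.exp (β * ‖p.1‖ ^ 2) < ‖p.2‖ ∧
        ‖p.2‖ < R * Real.exp (β * ‖p.1‖ ^ 2)} := by
  have hinv : Set.InvOn (shear β (-t)) (shear β t) (expShell R β) (expShell R β) :=
    ⟨fun p _ => shear_neg_shear β t p, fun p _ => by simpa using shear_neg_shear β (-t) p⟩
  exact hinv.bijOn (shear_mapsTo_expShell R β t) (shear_mapsTo_expShell R β (-t))

theorem stmt_16 (R β : ℝ) (hR : 1 < R) (hβ : β ≠ 0) (t : ℝ) :
    Set.BijOn
      (fun p : ℂ × ℂ =>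
        (p.1 + (t : ℂ), Complex.exp ((β : ℂ) * (2 * (t : ℂ) * p.1 + (t : ℂ) ^ 2)) * p.2))
      {p : ℂ × ℂ | Real.exp (β * ‖p.1‖ ^ 2) < ‖p.2‖ ∧
        ‖p.2‖ < R * Real.exp (β * ‖p.1‖ ^ 2)}
      {p : ℂ × ℂ | Real.exp (β * ‖p.1‖ ^ 2) < ‖p.2‖ ∧
        ‖p.2‖ < R * Real.exp (β * ‖p.1‖ ^ 2)} :=
  stmt_16_general R β t
end
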